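/- For every even n ≥ 4, the sequence of star transpositions consisting of (1,2), followed by (1,4), (1,6), …, (1,n), followed by (1,2), (1,3), (1,4), …, (1,n), is a 2-reachability network on n elements. -/

import Mathlib

/-!
A run of star transpositions `(1,c₁), …, (1,c_k)` with distinct `cᵢ ≠ 1` acts as the cycle
`1 ↦ c₁ ↦ ⋯ ↦ c_k ↦ 1`, and the second half `(1,2), …, (1,n)` contains every increasing run.
So to send `1 ↦ a` and `2 ↦ b` it suffices to first move the points `1` and `2`, using at most
`(1,2)` and one `(1,e)` with `e` even, to positions from which a single increasing cycle carries
them to `a` and `b`. Odd targets are handled through an even neighbour: `n` when the other target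
is `1`, and `min a b + 1` when both targets are odd.
-/

/-- The permutation of `ℕ` obtained by applying the transpositions in the list
in order (first element of the list applied first). -/
def netPerm (S : List (ℕ × ℕ)) : Equiv.Perm ℕ :=
  (S.map (fun p => Equiv.swap p.1 p.2)).reverse.prod

/-- `L` is a `t`-reachability network on the ground set `{1, …, n}`:
every entry is a transposition of two distinct points of `{1, …, n}`, and for every
choice of `t` distinct points `x 0, …, x (t-1)` of `{1, …, n}` there is a subsequence
of `L` whose composition (applied in order) maps `j + 1` to `x j` for `0 ≤ j < t`
(i.e. maps the point `j` to `x_j` for `1 ≤ j ≤ t`). -/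
def IsReachNet (n t : ℕ) (L : List (ℕ × ℕ)) : Prop :=
  (∀ p ∈ L, p.1 ∈ Finset.Icc 1 n ∧ p.2 ∈ Finset.Icc 1 n ∧ p.1 ≠ p.2) ∧
  ∀ x : Fin t → ℕ, (∀ j, x j ∈ Finset.Icc 1 n) → Function.Injective x →
    ∃ S : List (ℕ × ℕ), S.Sublist L ∧ ∀ j : Fin t, netPerm S (j.val + 1) = x j

/-- The sequence of star transpositions `(1,2)`, then `(1,4), (1,6), …, (1,n)`
(even second coordinates, increasing), then `(1,2), (1,3), (1,4), …, (1,n)`. -/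
def starSeqEven (n : ℕ) : List (ℕ × ℕ) :=
  ((1 : ℕ), (2 : ℕ)) ::
    (((List.range (n + 1)).filter (fun x => x % 2 = 0 ∧ 4 ≤ x)).map (fun x => ((1 : ℕ), x)) ++
     ((List.range (n + 1)).filter (fun x => 2 ≤ x)).map (fun x => ((1 : ℕ), x)))

def starNet (l : List ℕ) : List (ℕ × ℕ) := l.map ((1, ·))

def ReachesPair (L : List (ℕ × ℕ)) (a b : ℕ) : Prop :=
  ∃ S : List (ℕ × ℕ), S.Sublist L ∧ netPerm S 1 = a ∧ netPerm S 2 = b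

@[simp]
lemma netPerm_nil (k : ℕ) : netPerm [] k = k := rfl

@[simp]
lemma netPerm_cons (p : ℕ × ℕ) (S : List (ℕ × ℕ)) (k : ℕ) :
    netPerm (p :: S) k = netPerm S (Equiv.swap p.1 p.2 k) := by
  simp [netPerm, List.prod_append, Equiv.Perm.mul_apply]

lemma sublist_of_pairwise_lt_of_subset {α : Type*} [Preorder α] {l₁ l₂ : List α}
    (h₁ : l₁.Pairwise (· < ·)) (h₂ : l₂.Pairwise (· < ·)) (h : l₁ ⊆ l₂) : l₁.Sublist l₂ :=
  List.sublist_of_subperm_of_pairwise (List.subperm_of_subset h₁.nodup h) h₁ h₂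

lemma sublist_filter_range {l : List ℕ} {m : ℕ} {p : ℕ → Bool} (hl : l.Pairwise (· < ·))
    (h : ∀ x ∈ l, x < m ∧ p x) : l.Sublist ((List.range m).filter p) :=
  sublist_of_pairwise_lt_of_subset hl (List.pairwise_lt_range.filter p) fun x hx => by
    simpa using h x hx

lemma starSeqEven_eq_starNet (n : ℕ) :
    starSeqEven n = starNet (2 :: ((List.range (n + 1)).filter (fun x => x % 2 = 0 ∧ 4 ≤ x) ++
      (List.range (n + 1)).filter (fun x => 2 ≤ x))) := by
  simp [starSeqEven, starNet]

lemma of_mem_starSeqEven {n : ℕ} (hn : 2 ≤ n) {p : ℕ × ℕ} (hp : p ∈ starSeqEven n) :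
    p.1 = 1 ∧ 2 ≤ p.2 ∧ p.2 ≤ n := by
  simp only [starSeqEven_eq_starNet, starNet, List.mem_map, List.mem_cons, List.mem_append,
    List.mem_filter, List.mem_range, decide_eq_true_eq] at hp
  obtain ⟨c, hc, rfl⟩ := hp
  simp only [true_and]
  omega

lemma reachesPair_starSeqEven_of_lists {n a b : ℕ} (l₀ l₁ l₂ : List ℕ) (h₀ : l₀.Sublist [2])
    (h₁ : l₁.Pairwise (· < ·)) (h₁' : ∀ x ∈ l₁, x % 2 = 0 ∧ 4 ≤ x ∧ x ≤ n)
    (h₂ : l₂.Pairwise (· < ·)) (h₂' : ∀ x ∈ l₂, 2 ≤ x ∧ x ≤ n)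
    (ha : netPerm (starNet (l₀ ++ l₁ ++ l₂)) 1 = a)
    (hb : netPerm (starNet (l₀ ++ l₁ ++ l₂)) 2 = b) :
    ReachesPair (starSeqEven n) a b := by
  refine ⟨_, ?_, ha, hb⟩
  rw [starSeqEven_eq_starNet, List.append_assoc]
  refine (h₀.append (List.Sublist.append ?_ ?_)).map _
  · exact sublist_filter_range h₁ fun x hx => by simp only [decide_eq_true_eq]; grind
  · exact sublist_filter_range h₂ fun x hx => by simp only [decide_eq_true_eq]; grind

lemma reachesPair_starSeqEven_one_left {n b : ℕ} (hn : n % 2 = 0) (hb : 2 ≤ b)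
    (hbn : b ≤ n) : ReachesPair (starSeqEven n) 1 b := by
  obtain rfl | hb2 := eq_or_ne b 2
  · apply reachesPair_starSeqEven_of_lists [] [] [] <;> simp [starNet]
  obtain hbe | hbo := Nat.mod_two_eq_zero_or_one b
  · apply reachesPair_starSeqEven_of_lists [2] [b] [2] <;>
      simp (disch := omega) [starNet, Equiv.swap_apply_of_ne_of_ne] <;> omega
  · apply reachesPair_starSeqEven_of_lists [] [n] [2, b, n] <;>
      simp (disch := omega) [starNet, Equiv.swap_apply_of_ne_of_ne] <;> omega

lemma reachesPair_starSeqEven_one_right {n a : ℕ} (hn : n % 2 = 0) (ha : 2 ≤ a)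
    (han : a ≤ n) : ReachesPair (starSeqEven n) a 1 := by
  obtain rfl | ha2 := eq_or_ne a 2
  · apply reachesPair_starSeqEven_of_lists [] [] [2] <;> simp [starNet, han]
  obtain hae | hao := Nat.mod_two_eq_zero_or_one a
  · apply reachesPair_starSeqEven_of_lists [] [a] [2] <;>
      simp (disch := omega) [starNet, Equiv.swap_apply_of_ne_of_ne] <;> omega
  · apply reachesPair_starSeqEven_of_lists [2] [n] [2, a, n] <;>
      simp (disch := omega) [starNet, Equiv.swap_apply_of_ne_of_ne] <;> omega

lemma reachesPair_starSeqEven_of_two_le {n a b : ℕ} (ha : 2 ≤ a) (han : a ≤ n) (hb : 2 ≤ b)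
    (hbn : b ≤ n) (hab : a ≠ b) : ReachesPair (starSeqEven n) a b := by
  obtain rfl | hb2 := eq_or_ne b 2
  · apply reachesPair_starSeqEven_of_lists [] [] [a] <;>
      simp (disch := omega) [starNet, Equiv.swap_apply_of_ne_of_ne, ha, han]
  obtain rfl | ha2 := eq_or_ne a 2
  · apply reachesPair_starSeqEven_of_lists [] [] [2, b] <;>
      simp (disch := omega) [starNet, Equiv.swap_apply_of_ne_of_ne] <;> omega
  obtain hae | hao := Nat.mod_two_eq_zero_or_one a
  · apply reachesPair_starSeqEven_of_lists [] [a] [2, b] <;>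
      simp (disch := omega) [starNet, Equiv.swap_apply_of_ne_of_ne] <;> omega
  obtain hbe | hbo := Nat.mod_two_eq_zero_or_one b
  · apply reachesPair_starSeqEven_of_lists [2] [b] [2, a] <;>
      simp (disch := omega) [starNet, Equiv.swap_apply_of_ne_of_ne] <;> omega
  obtain hlt | hgt := hab.lt_or_gt
  · apply reachesPair_starSeqEven_of_lists [2] [a + 1] [2, a, a + 1, b] <;>
      simp (disch := omega) [starNet, Equiv.swap_apply_of_ne_of_ne] <;> omega
  · apply reachesPair_starSeqEven_of_lists [] [b + 1] [2, b, b + 1, a] <;>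
      simp (disch := omega) [starNet, Equiv.swap_apply_of_ne_of_ne] <;> omega

lemma reachesPair_starSeqEven {n a b : ℕ} (hn : n % 2 = 0) (ha : a ∈ Finset.Icc 1 n)
    (hb : b ∈ Finset.Icc 1 n) (hab : a ≠ b) : ReachesPair (starSeqEven n) a b := by
  rw [Finset.mem_Icc] at ha hb
  obtain rfl | ha1 := eq_or_ne a 1
  · exact reachesPair_starSeqEven_one_left hn (by omega) hb.2
  obtain rfl | hb1 := eq_or_ne b 1
  · exact reachesPair_starSeqEven_one_right hn (by omega) ha.2
  exact reachesPair_starSeqEven_of_two_le (by omega) ha.2 (by omega) hb.2 hab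

/-- **Star construction for 2-reachability, even case.** For every even `n ≥ 4`, the
sequence `(1,2)`, `(1,4), (1,6), …, (1,n)`, `(1,2), (1,3), …, (1,n)` of star
transpositions is a 2-reachability network on `n` elements. -/
theorem starSeqEven_two_reachability (n : ℕ) (hn : 4 ≤ n) (hpar : Even n) :
    IsReachNet n 2 (starSeqEven n) ∧ ∀ p ∈ starSeqEven n, p.1 = 1 := by
  have hmem := fun p (hp : p ∈ starSeqEven n) => of_mem_starSeqEven (by omega) hp
  refine ⟨⟨fun p hp => ?_, fun x hx hinj => ?_⟩, fun p hp => (hmem p hp).1⟩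
  · obtain ⟨h1, h2, h2n⟩ := hmem p hp
    simp only [Finset.mem_Icc, h1]
    omega
  · obtain ⟨S, hS, h0, h1⟩ :=
      reachesPair_starSeqEven (Nat.even_iff.mp hpar) (hx 0) (hx 1) (hinj.ne zero_ne_one)
    exact ⟨S, hS, Fin.forall_fin_two.mpr ⟨h0, h1⟩⟩
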